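/- (Global minimality of the true channel under the ℓ1 identifiability condition, sufficiency direction.) Let h ∈ ℝᵐ have all nonzero entries with sign vector v, A an m×k real matrix, B an n×k real matrix. If |vᵀ A g| ≤ ‖B g‖₁ for all g ∈ ℝᵏ, then for all g ∈ ℝᵏ, ‖h + A g‖₁ + ‖B g‖₁ ≥ ‖h‖₁. -/

import Mathlib

open Finset

namespace Real

theorem sign_mul_self_eq_abs (a : ℝ) : sign a * a = |a| := by
  rcases lt_trichotomy a 0 with ha | rfl | ha
  · rw [sign_of_neg ha, abs_of_neg ha, neg_one_mul]
  · simp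
  · rw [sign_of_pos ha, abs_of_pos ha, one_mul]

theorem abs_sign_le_one (a : ℝ) : |sign a| ≤ 1 := by
  rcases sign_apply_eq a with h | h | h <;> simp [h]

/-- The sign of `a` is a subgradient of `|·|` at `a`. -/
theorem abs_add_sign_mul_le_abs_add (a b : ℝ) : |a| + sign a * b ≤ |a + b| :=
  calc |a| + sign a * b = sign a * (a + b) := by rw [mul_add, sign_mul_self_eq_abs]
    _ ≤ |sign a| * |a + b| := abs_mul (sign a) (a + b) ▸ le_abs_self _
    _ ≤ |a + b| := mul_le_of_le_one_left (abs_nonneg _) (abs_sign_le_one a)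

theorem sum_abs_add_sum_sign_mul_le {ι : Type*} [Fintype ι] (a b : ι → ℝ) :
    ∑ i, |a i| + ∑ i, sign (a i) * b i ≤ ∑ i, |a i + b i| := by
  rw [← sum_add_distrib]
  exact sum_le_sum fun i _ => abs_add_sign_mul_le_abs_add (a i) (b i)

end Real

open Finset in
theorem l1_identifiability_sufficient_general {m n k : ℕ}
    (h : Fin m → ℝ)
    (v : Fin m → ℝ) (hv : ∀ i, v i = Real.sign (h i))
    (A : Matrix (Fin m) (Fin k) ℝ) (B : Matrix (Fin n) (Fin k) ℝ)
    (hcond : ∀ g : Fin k → ℝ, |∑ i, v i * A.mulVec g i| ≤ ∑ j, |B.mulVec g j|) :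
    ∀ g : Fin k → ℝ, ∑ i, |h i| ≤ (∑ i, |h i + A.mulVec g i|) + ∑ j, |B.mulVec g j| := by
  intro g
  have hsub := Real.sum_abs_add_sum_sign_mul_le h (A.mulVec g)
  simp only [← hv] at hsub
  linarith [neg_le_of_abs_le (hcond g)]

open Finset in
/-- Sufficiency: if `|vᵀ A g| ≤ ‖B g‖₁` for all `g` (with `v` the sign vector of the
everywhere-nonzero `h`), then `‖h + A g‖₁ + ‖B g‖₁ ≥ ‖h‖₁` for all `g`. -/
theorem l1_identifiability_sufficient {m n k : ℕ}
    (h : Fin m → ℝ) (hh : ∀ i, h i ≠ 0)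
    (v : Fin m → ℝ) (hv : ∀ i, v i = Real.sign (h i))
    (A : Matrix (Fin m) (Fin k) ℝ) (B : Matrix (Fin n) (Fin k) ℝ)
    (hcond : ∀ g : Fin k → ℝ, |∑ i, v i * A.mulVec g i| ≤ ∑ j, |B.mulVec g j|) :
    ∀ g : Fin k → ℝ, ∑ i, |h i| ≤ (∑ i, |h i + A.mulVec g i|) + ∑ j, |B.mulVec g j| :=
  l1_identifiability_sufficient_general h v hv A B hcond
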